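/- Let N ≥ 1 (the number of nodes), let L ≥ 1 and let F : {0, 1, …, L} → ℕ be a sequence of positive dimensions. For each node j ∈ {1, …, N} and each layer l ∈ {1, …, L}, let h^l_j : EuclideanSpace ℝ (Fin F_{l−1}) → EuclideanSpace ℝ (Fin F_l) be a map whose component functions x ↦ (h^l_j(x))_i (for i ∈ {1, …, F_l}) are differentiable everywhere with derivative of operator norm at most K_{j,l} at every point, where K_{j,l} ≥ 0; and for l ∈ {1, …, L−1} let ρ^l_j : EuclideanSpace ℝ (Fin F_l) → EuclideanSpace ℝ (Fin F_l) be Lipschitz with constant 1. Define f : (Fin N → EuclideanSpace ℝ (Fin F_0)) → (Fin N → EuclideanSpace ℝ (Fin F_L)) node-wise by f(X)_j = (h^L_j ∘ ρ^{L−1}_j ∘ ⋯ ∘ ρ^1_j ∘ h^1_j)(X_j). Then f is Lipschitz with respect to the supremum norms with constant max_{1 ≤ j ≤ N} ∏_{l=1}^{L} F_l · K_{j,l}, i.e. max_j ‖f(X₁)_j − f(X₂)_j‖ ≤ ( max_j ∏_{l=1}^{L} F_l · K_{j,l} ) · max_j ‖(X₁)_j − (X₂)_j‖ for all X₁, X₂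 : Fin N → EuclideanSpace ℝ (Fin F_0). -/
import Mathlib


/-- The `L`-layer network `h^L ∘ ρ^{L-1} ∘ h^{L-1} ∘ ⋯ ∘ ρ^1 ∘ h^1`
(Definition 1 of the paper), with `0`-based indexing: `h l` is the
`(l+1)`-st message-passing layer mapping dimension `F l` to `F (l+1)`,
and `ρ l` is the activation applied after layer `l+1`. -/
def gnnNet (F : ℕ → ℕ)
    (h : ∀ l : ℕ, EuclideanSpace ℝ (Fin (F l)) → EuclideanSpace ℝ (Fin (F (l + 1))))
    (ρ : ∀ l : ℕ, EuclideanSpace ℝ (Fin (F (l + 1))) → EuclideanSpace ℝ (Fin (F (l + 1)))) :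
    (L : ℕ) → EuclideanSpace ℝ (Fin (F 0)) → EuclideanSpace ℝ (Fin (F L))
  | 0 => id
  | 1 => h 0
  | (k + 2) => h (k + 1) ∘ ρ k ∘ gnnNet F h ρ (k + 1)



lemma layer_lip {n m : ℕ} (hm : 0 < m)
    (h : EuclideanSpace ℝ (Fin n) → EuclideanSpace ℝ (Fin m)) (K : ℝ) (hK : 0 ≤ K)
    (hd : ∀ i : Fin m, Differentiable ℝ (fun x => h x i))
    (hb : ∀ (i : Fin m) x, ‖fderiv ℝ (fun x => h x i) x‖ ≤ K) :
    ∀ x y, ‖h x - h y‖ ≤ (m : ℝ) * K * ‖x - y‖ := by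
  intro x y
  have comp : ∀ i : Fin m, ‖h x i - h y i‖ ≤ K * ‖x - y‖ := by
    intro i
    exact Convex.norm_image_sub_le_of_norm_fderiv_le
      (fun z _ => (hd i z)) (fun z _ => hb i z) convex_univ (Set.mem_univ y) (Set.mem_univ x)
  have hnorm : ‖h x - h y‖ = Real.sqrt (∑ i, ‖h x i - h y i‖ ^ 2) := by
    rw [EuclideanSpace.norm_eq]
    congr 1
  rw [hnorm]
  have hsum : (∑ i, ‖h x i - h y i‖ ^ 2) ≤ (m : ℝ) * (K * ‖x - y‖) ^ 2 := by
    calc (∑ i : Fin m, ‖h x i - h y i‖ ^ 2) ≤ ∑ i : Fin m, (K * ‖x - y‖) ^ 2 := by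
          apply Finset.sum_le_sum
          intro i _
          exact pow_le_pow_left₀ (norm_nonneg _) (comp i) 2
      _ = (m : ℝ) * (K * ‖x - y‖) ^ 2 := by
          simp [Finset.sum_const, mul_comm]
  have h1 : Real.sqrt (∑ i, ‖h x i - h y i‖ ^ 2) ≤ Real.sqrt ((m : ℝ) * (K * ‖x - y‖) ^ 2) :=
    Real.sqrt_le_sqrt hsum
  refine h1.trans ?_
  rw [Real.sqrt_mul (by positivity), Real.sqrt_sq (by positivity)]
  have : Real.sqrt (m : ℝ) ≤ (m : ℝ) := by
    have h1 : (1 : ℝ) ≤ (m : ℝ) := by exact_mod_cast hm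
    nlinarith [Real.sq_sqrt (le_of_lt (by exact_mod_cast hm : (0:ℝ) < m)),
      Real.sqrt_nonneg (m : ℝ)]
  calc Real.sqrt (m : ℝ) * (K * ‖x - y‖) ≤ (m : ℝ) * (K * ‖x - y‖) := by
        apply mul_le_mul_of_nonneg_right this (by positivity)
    _ = (m : ℝ) * K * ‖x - y‖ := by ring

lemma net_lip (F : ℕ → ℕ)
    (h : ∀ l : ℕ, EuclideanSpace ℝ (Fin (F l)) → EuclideanSpace ℝ (Fin (F (l + 1))))
    (ρ : ∀ l : ℕ, EuclideanSpace ℝ (Fin (F (l + 1))) → EuclideanSpace ℝ (Fin (F (l + 1))))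
    (K : ℕ → ℝ) :
    ∀ L, 1 ≤ L → (∀ l ≤ L, 0 < F l) → (∀ l < L, 0 ≤ K l) →
    (∀ l < L, ∀ i : Fin (F (l + 1)), Differentiable ℝ (fun x => h l x i)) →
    (∀ l < L, ∀ (i : Fin (F (l + 1))) (x : EuclideanSpace ℝ (Fin (F l))),
      ‖fderiv ℝ (fun x => h l x i) x‖ ≤ K l) →
    (∀ l, l + 1 < L → ∀ x y, ‖ρ l x - ρ l y‖ ≤ ‖x - y‖) →
    ∀ x y, ‖gnnNet F h ρ L x - gnnNet F h ρ L y‖ ≤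
      (∏ l ∈ Finset.range L, (F (l + 1) : ℝ) * K l) * ‖x - y‖ := by
  intro L
  induction L with
  | zero => omega
  | succ k ih =>
    intro _ hF hK hd hb hρ x y
    match k with
    | 0 =>
      simp only [gnnNet, Finset.prod_range_one]
      simpa using layer_lip (hF 1 le_rfl) (h 0) (K 0) (hK 0 one_pos)
        (hd 0 one_pos) (hb 0 one_pos) x y
    | k + 1 =>
      have ihk := ih (by omega) (fun l hl => hF l (by omega)) (fun l hl => hK l (by omega))
        (fun l hl => hd l (by omega)) (fun l hl => hb l (by omega))
        (fun l hl => hρ l (by omega)) x y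
      have hlast := layer_lip (hF (k + 2) le_rfl) (h (k + 1)) (K (k + 1))
        (hK (k+1) (by omega)) (hd (k+1) (by omega)) (hb (k+1) (by omega))
        (ρ k (gnnNet F h ρ (k + 1) x)) (ρ k (gnnNet F h ρ (k + 1) y))
      have hρk := hρ k (by omega) (gnnNet F h ρ (k + 1) x) (gnnNet F h ρ (k + 1) y)
      have hC : (0 : ℝ) ≤ (F (k + 2) : ℝ) * K (k + 1) := by
        have := hK (k+1) (by omega); positivity
      calc ‖gnnNet F h ρ (k + 2) x - gnnNet F h ρ (k + 2) y‖
          ≤ (F (k + 2) : ℝ) * K (k + 1) *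
            ‖ρ k (gnnNet F h ρ (k + 1) x) - ρ k (gnnNet F h ρ (k + 1) y)‖ := hlast
        _ ≤ (F (k + 2) : ℝ) * K (k + 1) *
            ‖gnnNet F h ρ (k + 1) x - gnnNet F h ρ (k + 1) y‖ :=
            mul_le_mul_of_nonneg_left hρk hC
        _ ≤ (F (k + 2) : ℝ) * K (k + 1) *
            ((∏ l ∈ Finset.range (k + 1), (F (l + 1) : ℝ) * K l) * ‖x - y‖) :=
            mul_le_mul_of_nonneg_left ihk hC
        _ = (∏ l ∈ Finset.range (k + 2), (F (l + 1) : ℝ) * K l) * ‖x - y‖ := by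
            rw [Finset.prod_range_succ (fun l => (F (l + 1) : ℝ) * K l) (k + 1)]; ring

/-- Theorem 1 of the paper, full form with the maximum over node indices:
if the network acts independently on each node `j` via per-node layers whose
components are differentiable with Jacobian row operator norms at most
`K j l`, and `1`-Lipschitz activations, then with respect to the
`(∞,2)`-norms the map is Lipschitz with constant
`max_j ∏_{l=1}^L F_l · K_{j,l}`. -/
theorem gnn_nodewise_lipschitz_of_jacobian_bounds
    (N : ℕ) (hN : 1 ≤ N) (L : ℕ) (hL : 1 ≤ L)
    (F : ℕ → ℕ) (hF : ∀ l ≤ L, 0 < F l)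
    (h : ∀ j : Fin N, ∀ l : ℕ,
      EuclideanSpace ℝ (Fin (F l)) → EuclideanSpace ℝ (Fin (F (l + 1))))
    (ρ : ∀ j : Fin N, ∀ l : ℕ,
      EuclideanSpace ℝ (Fin (F (l + 1))) → EuclideanSpace ℝ (Fin (F (l + 1))))
    (K : Fin N → ℕ → ℝ) (hK : ∀ j, ∀ l < L, 0 ≤ K j l)
    (hdiff : ∀ j, ∀ l < L, ∀ i : Fin (F (l + 1)),
      Differentiable ℝ (fun x => h j l x i))
    (hbound : ∀ j, ∀ l < L, ∀ (i : Fin (F (l + 1))) (x : EuclideanSpace ℝ (Fin (F l))),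
      ‖fderiv ℝ (fun x => h j l x i) x‖ ≤ K j l)
    (hρ : ∀ j, ∀ l, l + 1 < L → ∀ x y, ‖ρ j l x - ρ j l y‖ ≤ ‖x - y‖)
    (f : (Fin N → EuclideanSpace ℝ (Fin (F 0))) → (Fin N → EuclideanSpace ℝ (Fin (F L))))
    (hf : ∀ (X : Fin N → EuclideanSpace ℝ (Fin (F 0))) (j : Fin N),
      f X j = gnnNet F (h j) (ρ j) L (X j)) :
    ∀ X₁ X₂ : Fin N → EuclideanSpace ℝ (Fin (F 0)),
      (Finset.univ.sup' ⟨⟨0, hN⟩, Finset.mem_univ _⟩ fun j => ‖f X₁ j - f X₂ j‖) ≤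
        (Finset.univ.sup' ⟨⟨0, hN⟩, Finset.mem_univ _⟩ fun j =>
          ∏ l ∈ Finset.range L, (F (l + 1) : ℝ) * K j l) *
          Finset.univ.sup' ⟨⟨0, hN⟩, Finset.mem_univ _⟩ (fun j => ‖X₁ j - X₂ j‖) := by

  intro X₁ X₂
  have ne : (Finset.univ : Finset (Fin N)).Nonempty := ⟨⟨0, hN⟩, Finset.mem_univ _⟩
  have hC : ∀ j : Fin N, (0 : ℝ) ≤ ∏ l ∈ Finset.range L, (F (l + 1) : ℝ) * K j l := by
    intro j
    apply Finset.prod_nonneg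
    intro l hl
    have := hK j l (Finset.mem_range.mp hl)
    positivity
  have hsupX : (0 : ℝ) ≤ Finset.univ.sup' ne (fun j => ‖X₁ j - X₂ j‖) :=
    le_trans (norm_nonneg _) ((Finset.le_sup' (f := fun j => ‖X₁ j - X₂ j‖) (Finset.mem_univ (⟨0, hN⟩ : Fin N))))
  apply Finset.sup'_le
  intro j _
  rw [hf, hf]
  have hj := net_lip F (h j) (ρ j) (K j) L hL hF (hK j) (hdiff j) (hbound j) (hρ j)
    (X₁ j) (X₂ j)
  calc ‖gnnNet F (h j) (ρ j) L (X₁ j) - gnnNet F (h j) (ρ j) L (X₂ j)‖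
      ≤ (∏ l ∈ Finset.range L, (F (l + 1) : ℝ) * K j l) * ‖X₁ j - X₂ j‖ := hj
    _ ≤ (∏ l ∈ Finset.range L, (F (l + 1) : ℝ) * K j l) *
        Finset.univ.sup' ne (fun j => ‖X₁ j - X₂ j‖) :=
        mul_le_mul_of_nonneg_left (Finset.le_sup' (f := fun j => ‖X₁ j - X₂ j‖) (Finset.mem_univ j)) (hC j)
    _ ≤ (Finset.univ.sup' ne fun j => ∏ l ∈ Finset.range L, (F (l + 1) : ℝ) * K j l) *
        Finset.univ.sup' ne (fun j => ‖X₁ j - X₂ j‖) :=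
        mul_le_mul_of_nonneg_right (Finset.le_sup' (f := fun j => ∏ l ∈ Finset.range L, (F (l + 1) : ℝ) * K j l) (Finset.mem_univ j)) hsupX
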